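/- arXiv:1407.4798 — 4 statements merged into one kernel-verified Lean document; each statement's English description precedes it below -/
import Mathlib

section
/- Let x ∈ P ∩ (ℤ^p × ℝ^q) where P = conv{v^1,...,v^ℓ} + cone{r^1,...,r^m} with all r^j integral vectors. Then there exists a subset K ⊆ {1,...,m} with {r^j : j ∈ K} linearly independent, nonnegative integers μ_j (j ∈ K), and a point b ∈ ℤ^p × ℝ^q of the form b = v + Σ_{j∈K} θ_j r^j with v ∈ conv{v^1,...,v^ℓ} and θ_j ∈ [0,1], such that x = b + Σ_{j∈K} μ_j r^j. -/
/-!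
By conic Carathéodory, the cone part `∑ ν j • r j` of `x` can be rewritten with nonnegative
coefficients `d` supported on a set `K` of linearly independent generators: a linear relation among
the generators may be subtracted until some coefficient hits zero. Splitting `d j` into
`⌊d j⌋₊` and a fractional part in `[0, 1]` gives `b`, which is `x` minus an integer combination of
the integral vectors `r j`, hence integral wherever `x` is.
-/

open Finset

section ConicCaratheodory

variable {ι 𝕜 V : Type*} [Field 𝕜] [LinearOrder 𝕜] [IsStrictOrderedRing 𝕜]
  [AddCommGroup V] [Module 𝕜 V]

lemma exists_sub_mul_nonneg_and_eq_zero {S : Finset ι} {c g : ι → 𝕜} (hc : ∀ j ∈ S, 0 ≤ c j)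
    (hg : ∃ j ∈ S, 0 < g j) :
    ∃ t : 𝕜, (∀ j ∈ S, 0 ≤ c j - t * g j) ∧ ∃ j₀ ∈ S, c j₀ - t * g j₀ = 0 := by
  obtain ⟨j₀, hj₀, hmin⟩ := (S.filter (0 < g ·)).exists_min_image (fun j => c j / g j)
    (by simpa [Finset.Nonempty] using hg)
  rw [mem_filter] at hj₀
  refine ⟨c j₀ / g j₀, fun j hj => ?_, j₀, hj₀.1, by field_simp [hj₀.2.ne']; ring⟩
  rcases le_or_gt (g j) 0 with hgj | hgj
  · have : 0 ≤ c j₀ / g j₀ := div_nonneg (hc j₀ hj₀.1) hj₀.2.le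
    nlinarith [hc j hj]
  · have := hmin j (mem_filter.mpr ⟨hj, hgj⟩)
    rw [le_div_iff₀ hgj] at this
    linarith

lemma exists_nonneg_sum_erase_eq_of_not_linearIndepOn [DecidableEq ι] {r : ι → V}
    {S : Finset ι} {c : ι → 𝕜} (hc : ∀ j ∈ S, 0 ≤ c j) (hS : ¬LinearIndepOn 𝕜 r (S : Set ι)) :
    ∃ j₀ ∈ S, ∃ c' : ι → 𝕜, (∀ j ∈ S.erase j₀, 0 ≤ c' j) ∧
      ∑ j ∈ S.erase j₀, c' j • r j = ∑ j ∈ S, c j • r j := by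
  obtain ⟨f, hf, j₁, hj₁, hfj₁⟩ := not_linearIndepOn_finset_iff.mp hS
  -- rescaling the relation by `f j₁` makes its `j₁`-coefficient positive
  set g : ι → 𝕜 := fun j => f j₁ * f j
  have hg : ∑ j ∈ S, g j • r j = 0 := by simp only [g, mul_smul, ← smul_sum, hf, smul_zero]
  obtain ⟨t, ht, j₀, hj₀, htj₀⟩ :=
    exists_sub_mul_nonneg_and_eq_zero (g := g) hc ⟨j₁, hj₁, mul_self_pos.mpr hfj₁⟩
  refine ⟨j₀, hj₀, fun j => c j - t * g j, fun j hj => ht j (mem_of_mem_erase hj), ?_⟩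
  rw [sum_erase _ (by simp only [htj₀, zero_smul])]
  simp only [sub_smul, mul_smul, sum_sub_distrib, ← smul_sum, hg, smul_zero, sub_zero]

lemma exists_linearIndepOn_nonneg_sum_eq [DecidableEq ι] (r : ι → V) (S : Finset ι)
    (c : ι → 𝕜) (hc : ∀ j ∈ S, 0 ≤ c j) :
    ∃ K ⊆ S, ∃ d : ι → 𝕜, LinearIndepOn 𝕜 r (K : Set ι) ∧ (∀ j ∈ K, 0 ≤ d j) ∧
      ∑ j ∈ K, d j • r j = ∑ j ∈ S, c j • r j := by
  induction S using Finset.strongInduction generalizing c with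
  | H S ih =>
    by_cases hS : LinearIndepOn 𝕜 r (S : Set ι)
    · exact ⟨S, subset_rfl, c, hS, hc, rfl⟩
    obtain ⟨j₀, hj₀, c', hc', hsum⟩ := exists_nonneg_sum_erase_eq_of_not_linearIndepOn hc hS
    obtain ⟨K, hK, d, hKli, hd, hKsum⟩ := ih _ (erase_ssubset hj₀) c' hc'
    exact ⟨K, hK.trans (erase_subset _ _), d, hKli, hd, hKsum.trans hsum⟩

end ConicCaratheodory

lemma exists_int_eq_sub_sum_natCast_mul {ι : Type*} {a : ℝ} (ha : ∃ z : ℤ, a = z)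
    (K : Finset ι) (μ : ι → ℕ) {s : ι → ℝ} (hs : ∀ j, ∃ z : ℤ, s j = z) :
    ∃ z : ℤ, a - ∑ j ∈ K, (μ j : ℝ) * s j = z := by
  have mem : ∀ {y : ℝ}, (∃ z : ℤ, y = z) ↔ y ∈ (Int.castRingHom ℝ).range := fun {y} =>
    ⟨fun ⟨z, hz⟩ => ⟨z, hz.symm⟩, fun ⟨z, hz⟩ => ⟨z, hz.symm⟩⟩
  rw [mem] at ha ⊢
  exact sub_mem ha (sum_mem fun j _ => mul_mem (natCast_mem _ _) (mem.mp (hs j)))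

/-- Decomposition of a mixed-integer point of a polyhedron. -/
theorem stmt2 (p q ℓ m : ℕ) (v : Fin ℓ → (Fin (p + q) → ℝ))
    (r : Fin m → (Fin (p + q) → ℝ))
    (hrint : ∀ j i, ∃ z : ℤ, r j i = (z : ℝ))
    (x : Fin (p + q) → ℝ)
    (hxP : ∃ (w : Fin (p + q) → ℝ) (ν : Fin m → ℝ),
      w ∈ convexHull ℝ (Set.range v) ∧ (∀ j, 0 ≤ ν j) ∧ x = w + ∑ j, ν j • r j)
    (hxmixed : ∀ i : Fin (p + q), (i : ℕ) < p → ∃ z : ℤ, x i = (z : ℝ)) :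
    ∃ (K : Finset (Fin m)) (μ : Fin m → ℕ) (b w : Fin (p + q) → ℝ) (θ : Fin m → ℝ),
      LinearIndependent ℝ (fun j : K => r (j : Fin m)) ∧
      w ∈ convexHull ℝ (Set.range v) ∧
      (∀ j ∈ K, θ j ∈ Set.Icc (0 : ℝ) 1) ∧
      b = w + ∑ j ∈ K, θ j • r j ∧
      (∀ i : Fin (p + q), (i : ℕ) < p → ∃ z : ℤ, b i = (z : ℝ)) ∧
      x = b + ∑ j ∈ K, (μ j : ℝ) • r j := by
  obtain ⟨w, ν, hw, hν, hx⟩ := hxP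
  obtain ⟨K, -, d, hK, hd, hsum⟩ :=
    exists_linearIndepOn_nonneg_sum_eq r univ ν fun j _ => hν j
  set μ : Fin m → ℕ := fun j => ⌊d j⌋₊
  set θ : Fin m → ℝ := fun j => d j - μ j
  have hxb : x = (w + ∑ j ∈ K, θ j • r j) + ∑ j ∈ K, (μ j : ℝ) • r j := by
    simp only [hx, ← hsum, add_assoc, ← sum_add_distrib, ← add_smul, θ, sub_add_cancel]
  refine ⟨K, μ, _, w, θ, hK, hw, fun j hj => ⟨?_, ?_⟩, rfl, fun i hi => ?_, hxb⟩
  · exact sub_nonneg.mpr (Nat.floor_le (hd j hj))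
  · linarith [Nat.lt_floor_add_one (d j)]
  · convert exists_int_eq_sub_sum_natCast_mul (hxmixed i hi) K μ (hrint · i) using 3
    simp [hxb]
end

section
/- Consider the system x₁ ≥ 2, x_i ≥ x_{i-1}² for i = 2,...,n, x ∈ ℤ^n. Every feasible integral solution x satisfies x_n ≥ 2^(2^(n-1)). In particular, the binary encoding length of any feasible solution is exponential in n. -/
/-- Khachiyan's example: doubly exponential growth of feasible solutions. -/
theorem stmt10 (n : ℕ) (hn : 1 ≤ n) (x : ℕ → ℤ) (h1 : 2 ≤ x 1)
    (hstep : ∀ i, 2 ≤ i → i ≤ n → (x (i - 1)) ^ 2 ≤ x i) :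
    (2 : ℤ) ^ (2 ^ (n - 1)) ≤ x n := by
  induction n with
  | zero => omega
  | succ m ih =>
    rcases Nat.eq_or_lt_of_le hn with h | h
    · have : m = 0 := by omega
      subst this
      simpa using h1
    · have hm : 1 ≤ m := by omega
      have ihm := ih hm (fun i h2 hi => hstep i h2 (by omega))
      have hx : (x m) ^ 2 ≤ x (m + 1) := by
        have := hstep (m + 1) (by omega) le_rfl
        simpa using this
      have hpow : ((2 : ℤ) ^ (2 ^ (m - 1))) ^ 2 ≤ (x m) ^ 2 := by
        apply pow_le_pow_left₀ (by positivity) ihm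
      calc (2 : ℤ) ^ (2 ^ (m + 1 - 1)) = ((2 : ℤ) ^ (2 ^ (m - 1))) ^ 2 := by
            rw [← pow_mul]
            congr 1
            have : m + 1 - 1 = (m - 1) + 1 := by omega
            rw [this, pow_succ]
        _ ≤ (x m) ^ 2 := hpow
        _ ≤ x (m + 1) := hx
end

section
/- Let F = cone{r^1,...,r^k} ⊆ ℝ^n be a pointed cone, H ∈ ℝ^{n×n} symmetric with r^⊤ H r > 0 for all nonzero r ∈ F, and let 𝓗 = {x : f^⊤ x = 1} be a hyperplane with F ∩ 𝓗 compact and such that every nonzero r ∈ F has a positive scalar multiple in 𝓗. Let v₁* = min{r^⊤ H r : r ∈ F ∩ 𝓗} (which is positive). Let P ⊆ ℝ^n be compact, c ∈ ℝ^n, d ∈ ℝ, Q(x) = x^⊤ H x + c^⊤ x + d, and set v₂* = min{2 r^⊤ H p + c^⊤ r : p ∈ P, r ∈ F ∩ 𝓗}, v₃* = min{Q(p) : p ∈ P}. Then for any p ∈ P and r ∈ F with Q(p + r) ≤ 0, writing r = λ r̃ with r̃ ∈ F ∩ 𝓗 and λ ≥ 0, one has λ ≤ (-v₂* + √((v₂*)²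 - 4 v₁* v₃*)) / (2 v₁*). -/
open Matrix

/-- Bound on the conic scaling of points where the quadratic is nonpositive. -/
theorem stmt15 (n k : ℕ) (rg : Fin k → (Fin n → ℝ)) (H : Matrix (Fin n) (Fin n) ℝ)
    (hH : H.IsSymm) (F : Set (Fin n → ℝ))
    (hF : F = {x | ∃ μ : Fin k → ℝ, (∀ i, 0 ≤ μ i) ∧ x = ∑ i, μ i • rg i})
    (hpointed : ∀ x ∈ F, -x ∈ F → x = 0)
    (hpos : ∀ x ∈ F, x ≠ 0 → 0 < x ⬝ᵥ (H *ᵥ x))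
    (f : Fin n → ℝ)
    (hcpt : IsCompact (F ∩ {x | f ⬝ᵥ x = 1}))
    (hscale : ∀ x ∈ F, x ≠ 0 → ∃ t : ℝ, 0 < t ∧ f ⬝ᵥ (t • x) = 1)
    (P : Set (Fin n → ℝ)) (hPcpt : IsCompact P)
    (c : Fin n → ℝ) (d : ℝ) (v1 v2 v3 : ℝ)
    (hv1 : IsLeast {y | ∃ x ∈ F ∩ {x | f ⬝ᵥ x = 1}, y = x ⬝ᵥ (H *ᵥ x)} v1)
    (hv2 : IsLeast {y | ∃ p ∈ P, ∃ x ∈ F ∩ {x | f ⬝ᵥ x = 1},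
      y = 2 * (x ⬝ᵥ (H *ᵥ p)) + c ⬝ᵥ x} v2)
    (hv3 : IsLeast {y | ∃ p ∈ P, y = p ⬝ᵥ (H *ᵥ p) + c ⬝ᵥ p + d} v3) :
    ∀ p ∈ P, ∀ rr ∈ F,
      (p + rr) ⬝ᵥ (H *ᵥ (p + rr)) + c ⬝ᵥ (p + rr) + d ≤ 0 →
      ∀ lam : ℝ, 0 ≤ lam → ∀ rt ∈ F ∩ {x | f ⬝ᵥ x = 1}, rr = lam • rt →
        lam ≤ (-v2 + Real.sqrt (v2 ^ 2 - 4 * v1 * v3)) / (2 * v1) := by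

  intro p hp rr hrr hQ lam hlam rt hrt hrrt
  -- symmetry of the bilinear form
  have hsym : ∀ a b : Fin n → ℝ, a ⬝ᵥ (H *ᵥ b) = b ⬝ᵥ (H *ᵥ a) := by
    intro a b
    rw [Matrix.dotProduct_mulVec]
    nth_rewrite 1 [← hH.eq]
    rw [Matrix.vecMul_transpose, dotProduct_comm]
  -- v1 > 0
  have hv1pos : 0 < v1 := by
    obtain ⟨x, ⟨hxF, hx1⟩, hxv⟩ := hv1.1
    have hx0 : x ≠ 0 := by
      intro h; rw [h] at hx1; simp [dotProduct] at hx1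
    rw [hxv]; exact hpos x hxF hx0
  -- lower bounds from IsLeast
  have h1 : v1 ≤ rt ⬝ᵥ (H *ᵥ rt) := hv1.2 ⟨rt, hrt, rfl⟩
  have h2 : v2 ≤ 2 * (rt ⬝ᵥ (H *ᵥ p)) + c ⬝ᵥ rt := hv2.2 ⟨p, hp, rt, hrt, rfl⟩
  have h3 : v3 ≤ p ⬝ᵥ (H *ᵥ p) + c ⬝ᵥ p + d := hv3.2 ⟨p, hp, rfl⟩
  -- expand the quadratic
  have hexp : (p + rr) ⬝ᵥ (H *ᵥ (p + rr)) + c ⬝ᵥ (p + rr) + d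
      = lam ^ 2 * (rt ⬝ᵥ (H *ᵥ rt)) + lam * (2 * (rt ⬝ᵥ (H *ᵥ p)) + c ⬝ᵥ rt)
        + (p ⬝ᵥ (H *ᵥ p) + c ⬝ᵥ p + d) := by
    subst hrrt
    rw [Matrix.mulVec_add, Matrix.mulVec_smul]
    simp only [dotProduct_add, add_dotProduct, dotProduct_smul,
      smul_dotProduct, smul_eq_mul]
    rw [hsym p rt]
    ring
  have hquad : v1 * lam ^ 2 + v2 * lam + v3 ≤ 0 := by
    rw [hexp] at hQ
    nlinarith [sq_nonneg lam, mul_le_mul_of_nonneg_left h2 hlam,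
      mul_le_mul_of_nonneg_left h1 (sq_nonneg lam)]
  have key : (2 * v1 * lam + v2) ^ 2 ≤ v2 ^ 2 - 4 * v1 * v3 := by nlinarith
  have habs : |2 * v1 * lam + v2| ≤ Real.sqrt (v2 ^ 2 - 4 * v1 * v3) := by
    rw [← Real.sqrt_sq_eq_abs]; exact Real.sqrt_le_sqrt key
  have hle : 2 * v1 * lam + v2 ≤ Real.sqrt (v2 ^ 2 - 4 * v1 * v3) :=
    le_trans (le_abs_self _) habs
  rw [le_div_iff₀ (by linarith)]
  linarith
end

section
/- Let C ⊆ ℝ^n be a pointed cone of dimension d ≥ 1 generated by finitely many vectors. Then there exist vectors r^{s+1},...,r^t among the standard basis vectors e^1,...,e^n, with t - s = n - d, such that C' = cone(C ∪ {r^{s+1},...,r^t}) is full-dimensional and pointed. -/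
open Finset

def coneHull {n : ℕ} (S : Set (Fin n → ℝ)) : Set (Fin n → ℝ) :=
  {x | ∃ (k : ℕ) (μ : Fin k → ℝ) (y : Fin k → (Fin n → ℝ)),
    (∀ i, 0 ≤ μ i) ∧ (∀ i, y i ∈ S) ∧ x = ∑ i, μ i • y i}

/-!
The images of the coordinate vectors span the quotient `ℝⁿ ⧸ span C`, so some `n - d` of them
are a basis there, and the corresponding `e^i` span a complement of `span C`. A line in
`C + cone{e^i}` then splits along this direct sum into a line of `C` and a line of the
nonnegative orthant, both of which are trivial.
-/

open Module Submodule

namespace Module.Basis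

variable {ι K V : Type*} [DivisionRing K] [AddCommGroup V] [Module K V]

theorem finrank_span_image (b : Basis ι K V) (T : Finset ι) :
    finrank K (span K (b '' T)) = T.card := by
  rw [← Subtype.range_coe (s := (T : Set ι)), ← Set.range_comp,
    finrank_span_eq_card (b.linearIndependent.comp _ Subtype.val_injective)]
  simp

theorem exists_finset_isCompl_span_image [Finite ι] (b : Basis ι K V) (W : Submodule K V) :
    ∃ T : Finset ι, IsCompl W (span K (b '' T)) := by
  obtain ⟨T, -, -, hspan, hli⟩ := exists_linearIndepOn_extension (v := W.mkQ ∘ b)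
    (linearIndepOn_empty K _) (Set.empty_subset Set.univ)
  lift T to Finset ι using T.toFinite
  refine ⟨T, ⟨Disjoint.symm ?_, ?_⟩⟩
  · simpa [Set.range_comp] using range_ker_disjoint (v := b ∘ ((↑) : T → ι)) hli
  · rw [codisjoint_iff, ← map_mkQ_eq_top, map_span, ← Set.image_comp, eq_top_iff]
    refine le_trans ?_ (span_le.2 hspan)
    rw [Set.image_univ, Set.range_comp, span_image, b.span_eq, Submodule.map_top, range_mkQ]

end Module.Basis

namespace PointedCone

variable {R E : Type*}

section OrderedSemiring

variable [Semiring R] [PartialOrder R] [IsOrderedRing R] [AddCommMonoid E] [Module R E]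

theorem span_hull (s : Set E) : span R (hull R s : Set E) = span R s :=
  le_antisymm (span_le.2 (hull_le_span R s)) (span_mono subset_hull)

theorem hull_union (s t : Set E) : hull R (s ∪ t) = hull R s ⊔ hull R t :=
  span_union s t

end OrderedSemiring

variable [Ring R] [LinearOrder R] [IsOrderedRing R] [AddCommGroup E] [Module R E]

theorem lineal_eq_bot_iff {C : PointedCone R E} :
    C.lineal = ⊥ ↔ ∀ x ∈ C, -x ∈ C → x = 0 := by
  simp [Submodule.eq_bot_iff]

theorem lineal_hull_eq_bot_of_nonneg [PartialOrder E] [IsOrderedAddMonoid E] [PosSMulMono R E]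
    {s : Set E} (hs : ∀ x ∈ s, 0 ≤ x) : (hull R s).lineal = ⊥ := by
  have hpos : hull R s ≤ positive R E := span_le.2 hs
  rw [lineal_eq_bot_iff]
  exact fun x hx hnx => le_antisymm (neg_nonneg.1 (hpos hnx)) (hpos hx)

theorem lineal_sup_eq_bot {P Q : PointedCone R E} (hP : P.lineal = ⊥) (hQ : Q.lineal = ⊥)
    (hPQ : Disjoint (span R (P : Set E)) (span R (Q : Set E))) : (P ⊔ Q).lineal = ⊥ := by
  rw [lineal_eq_bot_iff] at *
  intro x hx hnx
  obtain ⟨p, hp, q, hq, rfl⟩ := Submodule.mem_sup.1 hx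
  obtain ⟨p', hp', q', hq', hpq'⟩ := Submodule.mem_sup.1 hnx
  have hsum : p + p' = -(q + q') := by
    rw [eq_neg_iff_add_eq_zero] at hpq' ⊢
    rw [← hpq']
    abel
  have hp0 : p + p' = 0 := disjoint_def.1 hPQ _
    (add_mem (Submodule.subset_span hp) (Submodule.subset_span hp'))
    (hsum ▸ neg_mem (add_mem (Submodule.subset_span hq) (Submodule.subset_span hq')))
  have hq0 : q + q' = 0 := by rwa [hp0, zero_eq_neg] at hsum
  rw [hP p hp (by rwa [neg_eq_of_add_eq_zero_right hp0]),
    hQ q hq (by rwa [neg_eq_of_add_eq_zero_right hq0]), add_zero]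

end PointedCone

open PointedCone

theorem coneHull_eq_hull {n : ℕ} (S : Set (Fin n → ℝ)) :
    coneHull S = (hull ℝ S : Set (Fin n → ℝ)) := by
  ext x
  simp only [SetLike.mem_coe, mem_span_set']
  constructor
  · rintro ⟨k, μ, y, hμ, hy, rfl⟩
    exact ⟨k, fun i => ⟨μ i, hμ i⟩, fun i => ⟨y i, hy i⟩, rfl⟩
  · rintro ⟨k, μ, y, rfl⟩
    exact ⟨k, fun i => μ i, fun i => y i, fun i => (μ i).2, fun i => (y i).2, rfl⟩

theorem stmt17_general (n s : ℕ) (r : Fin s → (Fin n → ℝ))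
    (C : Set (Fin n → ℝ)) (hC : C = coneHull (Set.range r))
    (hpointed : ∀ x ∈ C, -x ∈ C → x = 0)
    (d : ℕ) (hd : d = Module.finrank ℝ (Submodule.span ℝ C)) :
    ∃ T : Finset (Fin n), T.card = n - d ∧
      Submodule.span ℝ
        (coneHull (Set.range r ∪ (fun i => (Pi.single i 1 : Fin n → ℝ)) '' ↑T)) = ⊤ ∧
      (∀ x ∈ coneHull (Set.range r ∪ (fun i => (Pi.single i 1 : Fin n → ℝ)) '' ↑T),
        -x ∈ coneHull (Set.range r ∪ (fun i => (Pi.single i 1 : Fin n → ℝ)) '' ↑T) →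
        x = 0) := by
  subst hC
  rw [coneHull_eq_hull, span_hull] at hd
  simp only [coneHull_eq_hull, SetLike.mem_coe, span_hull] at hpointed ⊢
  obtain ⟨T, hT⟩ :=
    (Pi.basisFun ℝ (Fin n)).exists_finset_isCompl_span_image (span ℝ (Set.range r))
  have hcard := finrank_add_eq_of_isCompl hT
  rw [Basis.finrank_span_image, Module.finrank_fin_fun] at hcard
  have hbasis : ⇑(Pi.basisFun ℝ (Fin n)) = fun i => Pi.single i 1 :=
    funext (Pi.basisFun_apply ℝ _)
  rw [hbasis] at hT
  refine ⟨T, by omega, by rw [span_union, hT.sup_eq_top], ?_⟩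
  rw [← lineal_eq_bot_iff, hull_union]
  refine lineal_sup_eq_bot (lineal_eq_bot_iff.2 hpointed) (lineal_hull_eq_bot_of_nonneg ?_)
    (by rw [span_hull, span_hull]; exact hT.disjoint)
  rintro _ ⟨i, -, rfl⟩
  exact Pi.single_nonneg.2 zero_le_one

/-- A pointed cone of dimension `d` can be augmented with `n - d` standard basis
vectors to a full-dimensional pointed cone. -/
theorem stmt17 (n s : ℕ) (r : Fin s → (Fin n → ℝ))
    (C : Set (Fin n → ℝ)) (hC : C = coneHull (Set.range r))
    (hpointed : ∀ x ∈ C, -x ∈ C → x = 0)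
    (d : ℕ) (hd : d = Module.finrank ℝ (Submodule.span ℝ C)) (hd1 : 1 ≤ d) :
    ∃ T : Finset (Fin n), T.card = n - d ∧
      Submodule.span ℝ
        (coneHull (Set.range r ∪ (fun i => (Pi.single i 1 : Fin n → ℝ)) '' ↑T)) = ⊤ ∧
      (∀ x ∈ coneHull (Set.range r ∪ (fun i => (Pi.single i 1 : Fin n → ℝ)) '' ↑T),
        -x ∈ coneHull (Set.range r ∪ (fun i => (Pi.single i 1 : Fin n → ℝ)) '' ↑T) →
        x = 0) :=
  stmt17_general n s r C hC hpointed d hd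
end
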